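/- If w is a word with A_N(w^{|w|}) < |w|, then w is not primitive. -/

import Mathlib

/-- `wpow u m` is the `m`-fold concatenation of the word `u` with itself. -/
def wpow {α : Type*} (u : List α) (m : ℕ) : List α := (List.replicate m u).flatten

/-- A nondeterministic finite automaton with `q` states over alphabet `α`. -/
structure MyNFA (α : Type*) (q : ℕ) where
  step : Fin q → α → Fin q → Prop
  start : Fin q
  accept : Fin q → Prop

/-- `p` (restricted to indices `≤ w.length`) is an accepting walk of `M` reading `w`. -/
def IsAccWalk {α : Type*} {q : ℕ} (M : MyNFA α q) (w : List α) (p : ℕ → Fin q) : Prop :=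
  p 0 = M.start ∧ M.accept (p w.length) ∧
    ∀ i (h : i < w.length), M.step (p i) (w.get ⟨i, h⟩) (p (i + 1))

/-- Some NFA with `q` states accepts `w`, and among all words of length `|w|`
there is exactly one accepting walk (which reads `w`). -/
def UniqueWitness {α : Type*} (q : ℕ) (w : List α) : Prop :=
  ∃ M : MyNFA α q, ∃ p, IsAccWalk M w p ∧
    ∀ v p', List.length v = w.length → IsAccWalk M v p' →
      v = w ∧ ∀ i ≤ w.length, p' i = p i

/-- Unique-acceptance nondeterministic automatic complexity `A_N = A_Nu`. -/
noncomputable def AN {α : Type*} (w : List α) : ℕ := sInf {q | UniqueWitness q w}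

/-- Some NFA with `q` states accepts `w` and accepts no other word of length `|w|`. -/
def ExactWitness {α : Type*} (q : ℕ) (w : List α) : Prop :=
  ∃ M : MyNFA α q, (∃ p, IsAccWalk M w p) ∧
    ∀ v, List.length v = w.length → (∃ p', IsAccWalk M v p') → v = w

/-- Exact-acceptance nondeterministic automatic complexity `A_Ne`. -/
noncomputable def ANe {α : Type*} (w : List α) : ℕ := sInf {q | ExactWitness q w}

/-- Witness for the conditional automatic complexity `A_N(x ∣ y)`:
an NFA over the product alphabet such that exactly one accepting walk of
length `|y|` reads a word whose first projection is `y`, and the second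
projection of that word is `x`. -/
def CondWitness {A B : Type*} (q : ℕ) (x : List A) (y : List B) : Prop :=
  ∃ M : MyNFA (B × A) q, ∃ w : List (B × A), ∃ p, IsAccWalk M w p ∧
    w.map Prod.fst = y ∧ w.map Prod.snd = x ∧
    ∀ w' p', List.length w' = y.length → IsAccWalk M w' p' →
      w'.map Prod.fst = y → (w' = w ∧ ∀ i ≤ y.length, p' i = p i)

/-- Conditional nondeterministic automatic complexity `A_N(x ∣ y)`. -/
noncomputable def CondAN {A B : Type*} (x : List A) (y : List B) : ℕ :=
  sInf {q | CondWitness q x y}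

/-- `w` contains an `m`-th power: some nonempty `u` with `u^m` a factor of `w`. -/
def ContainsPow {α : Type*} (w : List α) (m : ℕ) : Prop :=
  ∃ u : List α, u ≠ [] ∧ (wpow u m) <:+: w

/-- A word is primitive if it is nonempty and not a proper power. -/
def Primitive {α : Type*} (w : List α) : Prop :=
  w ≠ [] ∧ ∀ (u : List α) (k : ℕ), 2 ≤ k → w ≠ wpow u k

lemma wpow_length {α : Type*} (u : List α) (m : ℕ) : (wpow u m).length = m * u.length := by
  simp [wpow]

lemma wpow_succ {α : Type*} (u : List α) (m : ℕ) : wpow u (m+1) = u ++ wpow u m := by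
  simp [wpow, List.replicate_succ]

lemma wpow_getElem {α : Type*} (u : List α) (m j : ℕ) (hj : j < (wpow u m).length)
    (hj' : j % u.length < u.length) :
    (wpow u m)[j] = u[j % u.length] := by
  induction m generalizing j with
  | zero => simp [wpow] at hj
  | succ m ih =>
    rcases lt_or_ge j u.length with hlt | hge
    · rw [List.getElem_of_eq (wpow_succ u m), List.getElem_append_left hlt]
      congr 1
      exact (Nat.mod_eq_of_lt hlt).symm
    · have hj2 : j - u.length < (wpow u m).length := by
        have := hj
        rw [wpow_length] at this ⊢
        rw [wpow_succ] at hj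
        simp [wpow_length] at hj
        omega
      rw [List.getElem_of_eq (wpow_succ u m), List.getElem_append_right hge, ih _ hj2]
      congr 1
      conv_rhs => rw [show j = j - u.length + u.length from by omega, Nat.add_mod_right]
      exact Nat.mod_lt _ (by omega)


section periods
variable {α : Type*} (f : ℕ → α)

lemma period_mul {a : ℕ} (hf : ∀ x, f (x + a) = f x) : ∀ k x, f (x + k * a) = f x := by
  intro k
  induction k with
  | zero => simp
  | succ k ih => intro x; rw [Nat.succ_mul, ← Nat.add_assoc, hf, ih]

lemma period_gcd : ∀ a b : ℕ, (∀ x, f (x + a) = f x) → (∀ x, f (x + b) = f x) →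
    ∀ x, f (x + Nat.gcd a b) = f x := by
  intro a
  induction a using Nat.strong_induction_on with
  | _ a ih =>
    intro b ha hb x
    rcases Nat.eq_zero_or_pos a with rfl | hpos
    · simpa using hb x
    · rw [Nat.gcd_rec a b]
      refine ih (b % a) (Nat.mod_lt _ hpos) a ?_ ha x
      intro y
      have hd : y + b % a + (b / a) * a = y + b := by
        rw [Nat.mul_comm]
        have := Nat.mod_add_div b a
        omega
      calc f (y + b % a) = f (y + b % a + (b/a) * a) := (period_mul f ha _ _).symm
        _ = f (y + b) := by rw [hd]
        _ = f y := hb y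

/-- globalize a window period, given a global period `n` and window length `≥ n + P`. -/
lemma period_globalize {n t P L : ℕ} (hn : 0 < n)
    (hglob : ∀ x, f (x + n) = f x)
    (hwin : ∀ j, t ≤ j → j + P < t + L → f (j + P) = f j)
    (hL : n + P ≤ L) : ∀ x, f (x + P) = f x := by
  have hcong : ∀ x y : ℕ, x % n = y % n → f x = f y := by
    intro x y hxy
    have h1 : ∀ z, f z = f (z % n) := by
      intro z
      conv_lhs => rw [show z = z % n + (z/n) * n from (Nat.mod_add_div' z n).symm]
      exact period_mul f hglob _ _
    rw [h1 x, h1 y, hxy]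
  intro x
  set z := x + n * t with hz
  set j := t + (z - t) % n with hj
  have hnt : t ≤ n * t := Nat.le_mul_of_pos_left t hn
  have hzt : t ≤ z := by omega
  have hjlt : j < t + n := by have := Nat.mod_lt (z - t) hn; omega
  have hjz : j % n = z % n := by
    have h1 : (t + (z - t) % n) % n = (t + (z - t)) % n :=
      Nat.ModEq.add_left t (Nat.mod_modEq (z - t) n)
    rw [hj, h1, Nat.add_sub_cancel' hzt]
  have hxz : x % n = z % n := (Nat.add_mul_mod_self_left x n t).symm
  have h2 : f (j + P) = f j := hwin j (by omega) (by omega)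
  have e1 : f x = f j := hcong x j (hxz.trans hjz.symm)
  have e2 : f (x + P) = f (j + P) := hcong (x + P) (j + P) (Nat.ModEq.add_right P (hxz.trans hjz.symm))
  rw [e1, e2, h2]

end periods



lemma get_idx_congr {α : Type*} (l : List α) {x y : ℕ} (hx : x < l.length) (hy : y < l.length)
    (h : x = y) : l.get ⟨x, hx⟩ = l.get ⟨y, hy⟩ := by subst h; rfl

lemma getElem_idx_congr {α : Type*} (l : List α) {x y : ℕ} (hx : x < l.length)
    (hy : y < l.length) (h : x = y) : l[x]'hx = l[y]'hy := by subst h; rfl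


lemma uniqueWitness_line {α : Type*} (v : List α) : UniqueWitness (v.length + 1) v := by
  set L := v.length with hL
  refine ⟨⟨fun i a j => (j : ℕ) = (i : ℕ) + 1 ∧ ∃ h : (i : ℕ) < L, a = v.get ⟨i, h⟩,
      ⟨0, by omega⟩, fun i => (i : ℕ) = L⟩,
    fun i => ⟨min i L, by omega⟩, ⟨?_, ?_, ?_⟩, ?_⟩
  · simp
  · simp; omega
  · intro i hi
    exact ⟨by simp; omega, by simpa using hi, by simp [Nat.min_eq_left (show i ≤ L by omega)]⟩
  · rintro u p' hlen ⟨hstart, haccept, hstep⟩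
    have key : ∀ i, i ≤ L → (p' i : ℕ) = i := by
      intro i
      induction i with
      | zero => intro _; rw [hstart]
      | succ i ih =>
        intro hi
        have h1 := hstep i (by omega)
        exact h1.1.trans (by rw [ih (by omega)])
    have hgets : ∀ (i : ℕ) (h : i < L), u.get ⟨i, by omega⟩ = v.get ⟨i, h⟩ := by
      intro i hi
      obtain ⟨-, h2, h3⟩ := hstep i (by omega)
      rw [h3]
      congr 1
      exact Fin.ext (key i (by omega))
    constructor
    · apply List.ext_get (by omega)
      intro i h1 h2
      exact hgets i (by omega)
    · intro i hi
      exact Fin.ext (by rw [key i hi]; simp; omega)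


lemma choose_b {n : ℕ} (I : ℕ → ℕ) (hn : 1 ≤ n)
    (hstrict : ∀ t, t < n + 1 → I t < I (t + 1))
    (htop : I (n+1) ≤ n * n) :
    ∃ b, 1 ≤ b ∧ b ≤ n ∧
      ((¬ (n ∣ (I b - I 0)) ∧ n ≤ I (n+1) - I b) ∨
       (¬ (n ∣ (I (n+1) - I b)) ∧ n ≤ I b - I 0)) := by
  have hmono : ∀ d s, s + d ≤ n + 1 → I s + d ≤ I (s + d) := by
    intro d
    induction d with
    | zero => simp
    | succ d ih =>
      intro s hs
      have h1 := ih s (by omega)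
      have h2 := hstrict (s + d) (by omega)
      have e : s + (d + 1) = s + d + 1 := by omega
      rw [e]
      omega
  have hm0 : ∀ s t, s ≤ t → t ≤ n + 1 → I s + (t - s) ≤ I t := by
    intro s t hst ht
    have := hmono (t - s) s (by omega)
    rw [show s + (t - s) = t by omega] at this
    exact this
  have grow : ∀ b, b ≤ n + 1 → (∀ b', b' ≤ b → n ∣ (I b' - I 0)) → b * n ≤ I b - I 0 := by
    intro b
    induction b with
    | zero => simp
    | succ b ih =>
      intro hb hdvd
      have h1 := ih (by omega) (fun b' hb' => hdvd b' (by omega))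
      have h2 : I b < I (b + 1) := hstrict b (by omega)
      have h3 : n ∣ (I b - I 0) := hdvd b (by omega)
      have h4 : n ∣ (I (b+1) - I 0) := hdvd (b+1) (by omega)
      have h5 : I 0 ≤ I b := by have := hm0 0 b (by omega) (by omega); omega
      -- from divisibility and strict inequality : (I b - I 0) + n ≤ I (b+1) - I 0
      have h6 : (I b - I 0) + n ≤ I (b+1) - I 0 := by
        obtain ⟨c, hc⟩ := h3
        obtain ⟨c', hc'⟩ := h4
        have hcc : c < c' := by
          refine Nat.lt_of_mul_lt_mul_left (a := n) ?_
          omega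
        have : c + 1 ≤ c' := hcc
        calc (I b - I 0) + n = n * c + n := by rw [hc]
          _ = n * (c + 1) := by ring
          _ ≤ n * c' := Nat.mul_le_mul_left n this
          _ = I (b+1) - I 0 := hc'.symm
      have : (b+1) * n = b * n + n := by ring
      omega
    
  have hex : ∃ b, ¬ (n ∣ (I b - I 0)) := by
    by_contra hco
    push_neg at hco
    have := grow (n+1) (by omega) (fun b' _ => hco b')
    have h0 : I 0 ≤ I (n+1) := by have := hm0 0 (n+1) (by omega) (by omega); omega
    have : (n+1) * n = n * n + n := by ring
    omega
  classical
  set b0 := Nat.find hex with hb0def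
  have hb0 : ¬ (n ∣ (I b0 - I 0)) := Nat.find_spec hex
  have hleast : ∀ b, b < b0 → n ∣ (I b - I 0) := by
    intro b hb
    have := Nat.find_min hex hb
    simpa using this
  have hb0pos : 1 ≤ b0 := by
    rcases Nat.eq_zero_or_pos b0 with h | h
    · exfalso; apply hb0; rw [h]; simp
    · exact h
  have hb0le : b0 ≤ n := by
    by_contra hgt
    push_neg at hgt
    have hall : ∀ b', b' ≤ n → n ∣ (I b' - I 0) := fun b' hb' => hleast b' (by omega)
    have h1 := grow n (by omega) hall
    have h2 : I n + 1 ≤ I (n+1) := by have := hm0 n (n+1) (by omega) (by omega); omega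
    have h0 : I 0 ≤ I n := by have := hm0 0 n (by omega) (by omega); omega
    omega
  rcases le_or_gt n (I (n+1) - I b0) with hc | hc
  · exact ⟨b0, hb0pos, hb0le, Or.inl ⟨hb0, hc⟩⟩
  · have hb02 : 2 ≤ b0 := by
      by_contra hlt
      have hb01 : b0 = 1 := by omega
      have := hm0 1 (n+1) (by omega) (by omega)
      rw [hb01] at hc
      omega
    have hIb : n ≤ I b0 - I 0 := by
      have h1 := grow (b0 - 1) (by omega) (fun b' hb' => hleast b' (by omega))
      have h2 : I (b0 - 1) < I b0 := by
        have := hstrict (b0 - 1) (by omega)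
        rw [show b0 - 1 + 1 = b0 by omega] at this
        exact this
      have h0 : I 0 ≤ I (b0 - 1) := by have := hm0 0 (b0-1) (by omega) (by omega); omega
      have : (b0 - 1) * n ≥ 1 * n := Nat.mul_le_mul_right n (by omega)
      omega
    have hpos : 0 < I (n+1) - I b0 := by
      have := hm0 b0 (n+1) (by omega) (by omega)
      omega
    exact ⟨b0, hb0pos, hb0le, Or.inr ⟨Nat.not_dvd_of_pos_of_lt hpos hc, hIb⟩⟩


lemma list_get_cast {α : Type*} {l l' : List α} (h : l = l') {k : ℕ}
    (hk : k < l.length) (hk' : k < l'.length) : l.get ⟨k, hk⟩ = l'.get ⟨k, hk'⟩ := by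
  subst h; rfl

lemma swap_period {α : Type*} {q : ℕ} (M : MyNFA α q) (v : List α) (p : ℕ → Fin q)
    (hwalk : IsAccWalk M v p)
    (huniq : ∀ u p', List.length u = v.length → IsAccWalk M u p' → u = v)
    (a bb c : ℕ) (hab : a < bb) (hbc : bb < c) (hcN : c ≤ v.length)
    (hpa : p bb = p a) (hpc : p c = p bb) :
    (∀ j (h2 : j + (bb - a) < c), a ≤ j →
        v.get ⟨j + (bb - a), by omega⟩ = v.get ⟨j, by omega⟩) ∧
    (∀ j (h2 : j + (c - bb) < c), a ≤ j →
        v.get ⟨j + (c - bb), by omega⟩ = v.get ⟨j, by omega⟩) := by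
  obtain ⟨hstart, haccept, hstep⟩ := hwalk
  set N := v.length with hN
  set P := bb - a with hPdef
  set Q := c - bb with hQdef
  have hPpos : 0 < P := by omega
  have hQpos : 0 < Q := by omega
  have haQP : a + Q + P = c := by omega
  have haP : a + P = bb := by omega
  set σ : ℕ → ℕ := fun k => if k < a then k else if k < a + Q then k + P else
      if k < c then k - Q else k with hσdef
  have hσlt : ∀ k, k < N → σ k < N := by
    intro k hk
    simp only [hσdef]
    split_ifs <;> omega
  set v' : List α := List.ofFn (fun k : Fin N => v.get ⟨σ k, hσlt k k.isLt⟩) with hv'def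
  have hv'len : v'.length = N := by simp [hv'def]
  have hv'get : ∀ k (hk : k < v'.length), v'.get ⟨k, hk⟩ = v.get ⟨σ k, hσlt k (by omega)⟩ := by
    intro k hk
    simp [hv'def, List.get_eq_getElem, List.getElem_ofFn]
  set p' : ℕ → Fin q := fun i => if i ≤ a then p i else if i ≤ a + Q then p (i + P) else
      if i ≤ c then p (i - Q) else p i with hp'def
  have hgeq : ∀ (x y : ℕ) (hx : x < v.length) (hy : y < v.length), x = y →
      v.get ⟨x, hx⟩ = v.get ⟨y, hy⟩ := by
    intro x y hx hy hxy
    subst hxy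
    rfl
  -- value lemmas for p'
  have hp0 : ∀ i, i ≤ a → p' i = p i := by
    intro i hi
    simp only [hp'def]
    rw [if_pos hi]
  have hp1 : ∀ i, a ≤ i → i ≤ a + Q → p' i = p (i + P) := by
    intro i h1 h2
    simp only [hp'def]
    split_ifs with g1
    · rw [show i = a by omega, haP]
      exact hpa.symm
    · rfl
  have hp2 : ∀ i, a + Q ≤ i → i ≤ c → p' i = p (i - Q) := by
    intro i h1 h2
    simp only [hp'def]
    split_ifs with g1 g2
    · exfalso; omega
    · rw [show i = a + Q by omega, haQP, hpc, hpa, Nat.add_sub_cancel]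
    · rfl
  have hp3 : ∀ i, c ≤ i → p' i = p i := by
    intro i hi
    simp only [hp'def]
    split_ifs with g1 g2 g3
    · rfl
    · exfalso; omega
    · rw [show i = c by omega, show c - Q = bb by omega]
      exact hpc.symm
    · rfl
  have hwalk' : IsAccWalk M v' p' := by
    refine ⟨?_, ?_, ?_⟩
    · rw [hp0 0 (by omega)]; exact hstart
    · rw [hv'len, hp3 N (by omega)]; exact haccept
    · intro i hi
      have hiN : i < N := by omega
      rw [hv'get i hi]
      by_cases c1 : i < a
      · rw [hp0 i (by omega), hp0 (i+1) (by omega)]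
        have he : v.get ⟨σ i, hσlt i hiN⟩ = v.get ⟨i, by omega⟩ :=
          hgeq (σ i) i _ (by omega) (by simp only [hσdef]; rw [if_pos c1])
        rw [he]
        exact hstep i (by omega)
      · by_cases c2 : i < a + Q
        · rw [hp1 i (by omega) (by omega), hp1 (i+1) (by omega) (by omega)]
          rw [show i + 1 + P = (i + P) + 1 by omega]
          have he : v.get ⟨σ i, hσlt i hiN⟩ = v.get ⟨i + P, by omega⟩ :=
            hgeq (σ i) (i + P) _ (by omega)
              (by simp only [hσdef]; rw [if_neg (by omega), if_pos c2])
          rw [he]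
          exact hstep (i + P) (by omega)
        · by_cases c3 : i < c
          · rw [hp2 i (by omega) (by omega), hp2 (i+1) (by omega) (by omega)]
            rw [show i + 1 - Q = (i - Q) + 1 by omega]
            have he : v.get ⟨σ i, hσlt i hiN⟩ = v.get ⟨i - Q, by omega⟩ :=
              hgeq (σ i) (i - Q) _ (by omega)
                (by simp only [hσdef]; rw [if_neg (by omega), if_neg (by omega), if_pos c3])
            rw [he]
            exact hstep (i - Q) (by omega)
          · rw [hp3 i (by omega), hp3 (i+1) (by omega)]
            have he : v.get ⟨σ i, hσlt i hiN⟩ = v.get ⟨i, by omega⟩ :=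
              hgeq (σ i) i _ (by omega)
                (by simp only [hσdef]; rw [if_neg (by omega), if_neg (by omega), if_neg (by omega)])
            rw [he]
            exact hstep i (by omega)
  have hveq : v' = v := huniq v' p' (by omega) hwalk'
  have hget : ∀ k (hk : k < N), v.get ⟨σ k, hσlt k hk⟩ = v.get ⟨k, by omega⟩ := by
    intro k hk
    rw [← hv'get k (by omega)]
    exact list_get_cast hveq (by omega) (by omega)
  constructor
  · intro j h2 h1
    have hk : j < N := by omega
    have hσj : σ j = j + P := by
      simp only [hσdef]
      rw [if_neg (by omega), if_pos (by omega)]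
    exact (hgeq (j + P) (σ j) (by omega) (hσlt j hk) hσj.symm).trans (hget j hk)
  · intro j h2 h1
    have hk : j + Q < N := by omega
    have hσj : σ (j + Q) = j := by
      simp only [hσdef]
      rw [if_neg (by omega), if_neg (by omega), if_pos (by omega)]
      omega
    exact ((hgeq j (σ (j+Q)) (by omega) (hσlt (j+Q) hk) hσj.symm).trans (hget (j+Q) hk)).symm


theorem stmt17 {α : Type*} (w : List α) (h : AN (wpow w w.length) < w.length) :
    ¬ Primitive w := by
  intro hprim
  obtain ⟨hne, hpow⟩ := hprim
  set n := w.length with hn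
  have hnpos : 0 < n := List.length_pos_iff.mpr hne
  set v := wpow w n with hv
  have hvlen : v.length = n * n := by rw [hv, wpow_length]
  have hSne : {q | UniqueWitness q v}.Nonempty := ⟨v.length + 1, uniqueWitness_line v⟩
  have hmem : UniqueWitness (AN v) v := Nat.sInf_mem hSne
  obtain ⟨M, p, hwalk, huniq⟩ := hmem
  have hq : AN v < n := h
  -- the periodic base function
  set fw : ℕ → α := fun j => w.get ⟨j % n, Nat.mod_lt j hnpos⟩ with hfw
  have hfglob : ∀ x, fw (x + n) = fw x := by
    intro x
    simp only [hfw]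
    exact get_idx_congr w _ _ (Nat.add_mod_right x n)
  have hvget : ∀ (j : ℕ) (hj : j < v.length), v.get ⟨j, hj⟩ = fw j := by
    intro j hj
    have hj' : j < (wpow w n).length := by rw [← hv]; omega
    simp only [hfw]
    rw [List.get_eq_getElem, List.get_eq_getElem]
    exact wpow_getElem w n j hj' (Nat.mod_lt j hnpos)
  -- pigeonhole: some state occurs n+2 times
  have hcard : Fintype.card (Fin (AN v)) * (n + 1) < Fintype.card (Fin (n*n+1)) := by
    rw [Fintype.card_fin, Fintype.card_fin]
    have h1 : AN v + 1 ≤ n := hq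
    nlinarith
  obtain ⟨s, hs⟩ := Fintype.exists_lt_card_fiber_of_mul_lt_card
    (f := fun i : Fin (n*n+1) => p (i : ℕ)) hcard
  have hcard2 : n + 2 ≤ (Finset.univ.filter (fun i : Fin (n*n+1) => p (i:ℕ) = s)).card := by
    have := hs
    exact Nat.succ_le_of_lt (by simpa using this)
  set e := (Finset.univ.filter (fun i : Fin (n*n+1) => p (i:ℕ) = s)).orderEmbOfCardLe hcard2 with he
  set I : ℕ → ℕ := fun t => ((e ⟨min t (n+1), by omega⟩ : Fin (n*n+1)) : ℕ) with hI
  have hIval : ∀ t (ht : t < n + 2), I t = ((e ⟨t, ht⟩ : Fin (n*n+1)) : ℕ) := by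
    intro t ht
    have hfin : (⟨min t (n+1), by omega⟩ : Fin (n+2)) = ⟨t, ht⟩ := Fin.ext (by simp; omega)
    simp only [hI, hfin]
  have hIs : ∀ t, t < n + 2 → p (I t) = s := by
    intro t ht
    have hmem2 := (Finset.univ.filter (fun i : Fin (n*n+1) => p (i:ℕ) = s)).orderEmbOfCardLe_mem hcard2 ⟨t, ht⟩
    rw [Finset.mem_filter] at hmem2
    rw [hIval t ht]
    exact hmem2.2
  have hIstrict : ∀ t, t < n + 1 → I t < I (t + 1) := by
    intro t ht
    rw [hIval t (by omega), hIval (t+1) (by omega)]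
    exact e.strictMono (show (⟨t, by omega⟩ : Fin (n+2)) < ⟨t+1, by omega⟩ from by
      simp [Fin.lt_def])
  have hItop : I (n+1) ≤ n * n := by
    rw [hIval (n+1) (by omega)]
    exact Nat.lt_succ_iff.mp (e ⟨n+1, by omega⟩).isLt
  obtain ⟨b, hb1, hb2, hbcase⟩ := choose_b I hnpos hIstrict hItop
  have hmono : ∀ s' t : ℕ, s' < t → t ≤ n + 1 → I s' < I t := by
    intro s' t hst ht
    induction t with
    | zero => omega
    | succ t ih =>
      rcases Nat.lt_succ_iff_lt_or_eq.mp hst with h' | h'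
      · exact lt_trans (ih h' (by omega)) (hIstrict t (by omega))
      · subst h'; exact hIstrict s' (by omega)
  have hABlt : I 0 < I b := hmono 0 b (by omega) (by omega)
  have hBClt : I b < I (n+1) := hmono b (n+1) (by omega) (by omega)
  have hpa : p (I b) = p (I 0) := by rw [hIs b (by omega), hIs 0 (by omega)]
  have hpc : p (I (n+1)) = p (I b) := by rw [hIs (n+1) (by omega), hIs b (by omega)]
  have huniq' : ∀ u p', u.length = v.length → IsAccWalk M u p' → u = v :=
    fun u p' hl hw => (huniq u p' hl hw).1
  obtain ⟨hper1, hper2⟩ := swap_period M v p hwalk huniq' (I 0) (I b) (I (n+1))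
    hABlt hBClt (by omega) hpa hpc
  -- extract a global period not divisible by n
  have hPst : ∃ Pst : ℕ, ¬ (n ∣ Pst) ∧ ∀ x, fw (x + Pst) = fw x := by
    rcases hbcase with ⟨hnd, hwin⟩ | ⟨hnd, hwin⟩
    · refine ⟨I b - I 0, hnd, ?_⟩
      refine period_globalize fw hnpos hfglob (t := I 0) (L := I (n+1) - I 0)
        ?_ (by omega)
      intro j hj1 hj2
      have hj3 : j + (I b - I 0) < I (n+1) := by omega
      rw [← hvget _ (by omega), ← hvget _ (by omega)]
      exact hper1 j hj3 hj1
    · refine ⟨I (n+1) - I b, hnd, ?_⟩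
      refine period_globalize fw hnpos hfglob (t := I 0) (L := I (n+1) - I 0)
        ?_ (by omega)
      intro j hj1 hj2
      have hj3 : j + (I (n+1) - I b) < I (n+1) := by omega
      rw [← hvget _ (by omega), ← hvget _ (by omega)]
      exact hper2 j hj3 hj1
  obtain ⟨Pst, hndvd, hper⟩ := hPst
  -- gcd period
  set g := Nat.gcd Pst n with hg
  have hgper : ∀ x, fw (x + g) = fw x := period_gcd fw Pst n hper hfglob
  have hgdvd : g ∣ n := Nat.gcd_dvd_right _ _
  have hgn : g ≠ n := fun hgeq => hndvd (hgeq ▸ Nat.gcd_dvd_left Pst n)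
  have hgpos : 0 < g := Nat.gcd_pos_of_pos_right _ hnpos
  have hgle : g ≤ n := Nat.le_of_dvd hnpos hgdvd
  obtain ⟨k, hkeq⟩ := hgdvd
  have hgdvd' : g ∣ n := Dvd.intro k hkeq.symm
  have hkg : k * g = n := by rw [Nat.mul_comm]; exact hkeq.symm
  have hk2 : 2 ≤ k := by
    have hkne0 : k ≠ 0 := by rintro rfl; simp at hkeq; omega
    have hkne1 : k ≠ 1 := by rintro rfl; simp at hkeq; exact hgn hkeq.symm
    omega
  apply hpow (w.take g) k hk2
  -- w = (w.take g)^k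
  have htlen : (w.take g).length = g := by
    rw [List.length_take]
    omega
  have hwlen2 : (wpow (w.take g) k).length = n := by rw [wpow_length, htlen]; omega
  apply List.ext_get (by omega)
  intro i h1 h2
  have hin : i < n := by omega
  have hig : i % g < g := Nat.mod_lt _ hgpos
  have step1 : w.get ⟨i, h1⟩ = fw i := by
    simp only [hfw]
    exact get_idx_congr w _ _ (Nat.mod_eq_of_lt hin).symm
  have step2 : fw i = fw (i % g) := by
    conv_lhs => rw [show i = i % g + (i / g) * g from (Nat.mod_add_div' i g).symm]
    exact period_mul fw hgper _ _
  have step3 : fw (i % g) = w.get ⟨i % g, by omega⟩ := by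
    simp only [hfw]
    exact get_idx_congr w _ _ (Nat.mod_eq_of_lt (by omega))
  have step4 : (wpow (w.take g) k).get ⟨i, h2⟩ = w.get ⟨i % g, by omega⟩ := by
    rw [List.get_eq_getElem]
    have hbound : i < (wpow (w.take g) k).length := by omega
    have hmlt : i % (w.take g).length < (w.take g).length := by rw [htlen]; exact hig
    have hwp := wpow_getElem (w.take g) k i hbound hmlt
    rw [hwp]
    rw [List.getElem_take]
    rw [List.get_eq_getElem]
    exact getElem_idx_congr w (x := i % (w.take g).length) (y := i % g)
      (by rw [htlen]; omega) (by omega) (by rw [htlen])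
  rw [step1, step2, step3, step4]
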